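/- Let H be a finite-dimensional complex Hilbert space and let P₁, …, Pₙ be positive semidefinite operators on H with Σᵢ₌₁ⁿ Pᵢ = 1 (the identity). Let φ be a unit vector in H and ψ any vector in H, and set nᵢ = ⟨φ, Pᵢ φ⟩. Then |⟨φ, ψ⟩|² ≤ Σ_{i : nᵢ ≠ 0} |⟨φ, Pᵢ ψ⟩|² / nᵢ, where ⟨φ, Pᵢ ψ⟩ = ⟨√Pᵢ φ, √Pᵢ ψ⟩ and √Pᵢ denotes the positive semidefinite square root of Pᵢ. -/

import Mathlib

/-!
Since `⟪φ, Pᵢ ψ⟫ = ⟪√Pᵢ φ, √Pᵢ ψ⟫` and `nᵢ = ‖√Pᵢ φ‖²`, the terms with `nᵢ = 0` vanish.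
Decomposing `⟪φ, ψ⟫ = ∑ᵢ ⟪φ, Pᵢ ψ⟫` by `∑ Pᵢ = 1`, the claim follows from the triangle
inequality and the Cauchy–Schwarz inequality in Sedrakyan's form
`(∑ aᵢ)² / ∑ nᵢ ≤ ∑ aᵢ² / nᵢ`, because `∑ nᵢ = ‖φ‖² = 1`.
-/

open scoped InnerProductSpace

namespace ContinuousLinearMap

variable {H : Type*} [NormedAddCommGroup H] [InnerProductSpace ℂ H] [CompleteSpace H]

theorem IsPositive.inner_apply_eq_inner_sqrt {T : H →L[ℂ] H} (hT : T.IsPositive) (x y : H) :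
    ⟪x, T y⟫_ℂ = ⟪CFC.sqrt T x, CFC.sqrt T y⟫_ℂ := by
  conv_lhs => rw [← CFC.sqrt_mul_sqrt_self T ((nonneg_iff_isPositive T).2 hT)]
  rw [mul_apply_eq_comp, ← adjoint_inner_left, (CFC.sqrt_nonneg T).isSelfAdjoint.adjoint_eq]

theorem IsPositive.inner_apply_eq_zero_of_re_inner_apply_self_eq_zero {T : H →L[ℂ] H}
    (hT : T.IsPositive) {x : H} (hx : (⟪x, T x⟫_ℂ).re = 0) (y : H) : ⟪x, T y⟫_ℂ = 0 := by
  rw [hT.inner_apply_eq_inner_sqrt, ← RCLike.re_to_complex, inner_self_eq_norm_sq,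
    sq_eq_zero_iff, norm_eq_zero] at hx
  rw [hT.inner_apply_eq_inner_sqrt, hx, inner_zero_left]

end ContinuousLinearMap

theorem inner_eq_sum_inner_apply {𝕜 E ι : Type*} [RCLike 𝕜] [NormedAddCommGroup E]
    [InnerProductSpace 𝕜 E] [Fintype ι] {P : ι → E →L[𝕜] E} (hP : ∑ i, P i = 1) (x y : E) :
    ⟪x, y⟫_𝕜 = ∑ i, ⟪x, P i y⟫_𝕜 := by
  rw [← inner_sum, ← sum_apply, hP, one_apply_eq_self]

theorem abs_inner_sq_le_sum_div
    {H : Type*} [NormedAddCommGroup H] [InnerProductSpace ℂ H] [FiniteDimensional ℂ H]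
    {n : ℕ} (P : Fin n → H →L[ℂ] H) (hpos : ∀ i, (P i).IsPositive)
    (hsum : ∑ i, P i = 1) (φ ψ : H) (hφ : ‖φ‖ = 1) :
    ‖⟪φ, ψ⟫_ℂ‖ ^ 2 ≤
      ∑ i ∈ Finset.univ.filter (fun i => (⟪φ, (P i) φ⟫_ℂ).re ≠ 0),
        ‖⟪φ, (P i) ψ⟫_ℂ‖ ^ 2 / (⟪φ, (P i) φ⟫_ℂ).re := by
  set s := Finset.univ.filter (fun i => (⟪φ, P i φ⟫_ℂ).re ≠ 0)
  have hweights : ∑ i, (⟪φ, P i φ⟫_ℂ).re = 1 := by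
    rw [← Complex.re_sum, ← inner_eq_sum_inner_apply hsum, ← RCLike.re_to_complex,
      inner_self_eq_norm_sq, hφ, one_pow]
  have hsupport (i) (hi : (⟪φ, P i ψ⟫_ℂ) ≠ 0) : (⟪φ, P i φ⟫_ℂ).re ≠ 0 :=
    mt (fun h => (hpos i).inner_apply_eq_zero_of_re_inner_apply_self_eq_zero h ψ) hi
  calc ‖⟪φ, ψ⟫_ℂ‖ ^ 2 = ‖∑ i ∈ s, ⟪φ, P i ψ⟫_ℂ‖ ^ 2 := by
        rw [Finset.sum_filter_of_ne fun i _ => hsupport i, ← inner_eq_sum_inner_apply hsum]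
    _ ≤ (∑ i ∈ s, ‖⟪φ, P i ψ⟫_ℂ‖) ^ 2 := pow_le_pow_left₀ (norm_nonneg _) (norm_sum_le _ _) 2
    _ = (∑ i ∈ s, ‖⟪φ, P i ψ⟫_ℂ‖) ^ 2 / ∑ i ∈ s, (⟪φ, P i φ⟫_ℂ).re := by
        rw [Finset.sum_filter_ne_zero, hweights, div_one]
    _ ≤ _ := Finset.sq_sum_div_le_sum_sq_div _ _ fun i hi =>
        ((hpos i).re_inner_nonneg_right φ).lt_of_ne' (Finset.mem_filter.1 hi).2
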